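/- Let (L,Δ,S) be a locality, K a partial normal subgroup with T = S ∩ K, and R a subgroup of S. Then the full preimage of R̄ under the quotient map ρ : L → L/K equals KR, i.e. {f ∈ L : f̄ ∈ R̄} = KR = {Π(k,r) : k ∈ K, r ∈ R, (k,r) ∈ D}. -/

import Mathlib

universe u v w

/-- A partial group in the sense of Chermak: a set `L` with a set `D` of words,
a (total, but only meaningful on `D`) product `prod`, and an involutory inversion. -/
structure PartialGroup (L : Type u) where
  D : Set (List L)
  prod : List L → L
  inv : L → L
  nil_mem : ([] : List L) ∈ D
  single_mem : ∀ f : L, [f] ∈ D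
  append_closed : ∀ u v : List L, u ++ v ∈ D → u ∈ D ∧ v ∈ D
  prod_single : ∀ f : L, prod [f] = f
  prod_assoc : ∀ u v w : List L, u ++ v ++ w ∈ D →
    (u ++ [prod v] ++ w ∈ D ∧ prod (u ++ v ++ w) = prod (u ++ [prod v] ++ w))
  inv_inv : ∀ f : L, inv (inv f) = f
  inv_word_mem : ∀ u ∈ D, (u.reverse.map inv) ++ u ∈ D
  prod_inv_word : ∀ u ∈ D, prod ((u.reverse.map inv) ++ u) = prod []

namespace PartialGroup

variable {L : Type u} (PG : PartialGroup L)

/-- The identity element `1 = Π(∅)`. -/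
def one : L := PG.prod []

/-- Conjugation `x^g = Π(g⁻¹, x, g)` (only meaningful when `(g⁻¹,x,g) ∈ D`). -/
def conj (g x : L) : L := PG.prod [PG.inv g, x, g]

/-- `D(g)`: the set of `x` for which conjugation by `g` is defined. -/
def Dset (g : L) : Set L := {x | [PG.inv g, x, g] ∈ PG.D}

/-- `P^g`, the image of a subset under conjugation by `g`. -/
def conjSet (g : L) (P : Set L) : Set L := PG.conj g '' P

/-- A partial subgroup: nonempty, closed under inversion and under defined products. -/
def IsPartialSubgroup (H : Set L) : Prop :=
  H.Nonempty ∧ (∀ h ∈ H, PG.inv h ∈ H) ∧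
    ∀ v ∈ PG.D, (∀ x ∈ v, x ∈ H) → PG.prod v ∈ H

/-- A partial normal subgroup: a partial subgroup closed under defined conjugation. -/
def IsPartialNormal (N : Set L) : Prop :=
  PG.IsPartialSubgroup N ∧ ∀ x ∈ N, ∀ f : L, x ∈ PG.Dset f → PG.conj f x ∈ N

/-- A subgroup of a partial group: a partial subgroup all of whose words lie in `D`. -/
def IsSubgroup (H : Set L) : Prop :=
  PG.IsPartialSubgroup H ∧ ∀ w : List L, (∀ x ∈ w, x ∈ H) → w ∈ PG.D

/-- A `p`-subgroup: a subgroup of `p`-power order. -/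
def IsPSubgroup (p : ℕ) (H : Set L) : Prop :=
  PG.IsSubgroup H ∧ ∃ k : ℕ, Nat.card H = p ^ k

/-- The product `MN = {Π(m,n) : m ∈ M, n ∈ N, (m,n) ∈ D}` of two subsets. -/
def setProd (M N : Set L) : Set L :=
  {z | ∃ m ∈ M, ∃ n ∈ N, [m, n] ∈ PG.D ∧ z = PG.prod [m, n]}

/-- The product `N₁N₂⋯N_l` of a family of subsets. -/
def multiProd {l : ℕ} (N : Fin l → Set L) : Set L :=
  {z | ∃ n : Fin l → L, List.ofFn n ∈ PG.D ∧ (∀ i, n i ∈ N i) ∧ z = PG.prod (List.ofFn n)}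

/-- A word is in `D` via a chain of groups from `Δ`. -/
def InDVia (Δ : Set (Set L)) (wrd : List L) : Prop :=
  ∃ P : Fin (wrd.length + 1) → Set L, (∀ i, P i ∈ Δ) ∧
    ∀ i : Fin wrd.length,
      P i.castSucc ⊆ PG.Dset (wrd.get i) ∧ PG.conjSet (wrd.get i) (P i.castSucc) = P i.succ

/-- `S_g = {s ∈ S : (g⁻¹,s,g) ∈ D and s^g ∈ S}`. -/
def Sg (S : Set L) (g : L) : Set L :=
  {s ∈ S | s ∈ PG.Dset g ∧ PG.conj g s ∈ S}

/-- `S_w` for a word `w = (g₁,…,gₙ)`: those `s ∈ S` admitting a chain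
`s = x₀, x₁, …, xₙ ∈ S` with `x_{i-1}^{g_i} = x_i`. -/
def Sw (S : Set L) (wrd : List L) : Set L :=
  {s ∈ S | ∃ x : Fin (wrd.length + 1) → L, (∀ i, x i ∈ S) ∧ x 0 = s ∧
    ∀ i : Fin wrd.length,
      x i.castSucc ∈ PG.Dset (wrd.get i) ∧ PG.conj (wrd.get i) (x i.castSucc) = x i.succ}

/-- The (right) coset `Kf = {kf : k ∈ K, (k,f) ∈ D}`. -/
def coset (K : Set L) (f : L) : Set L :=
  {z | ∃ k ∈ K, [k, f] ∈ PG.D ∧ z = PG.prod [k, f]}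

/-- A maximal coset of `K`: a coset maximal under inclusion among cosets of `K`. -/
def IsMaxCoset (K C : Set L) : Prop :=
  (∃ f, C = PG.coset K f) ∧ ∀ g : L, C ⊆ PG.coset K g → C = PG.coset K g

/-- `f` and `g` lie in a common maximal coset of `K`, i.e. `f̄ = ḡ` in `L/K`. -/
def SameMaxCoset (K : Set L) (f g : L) : Prop :=
  ∃ C, PG.IsMaxCoset K C ∧ f ∈ C ∧ g ∈ C

/-- `N_K(P,Q) = {x ∈ K : P ⊆ D(x), P^x ≤ Q}`. -/
def NBetween (K P Q : Set L) : Set L :=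
  {x ∈ K | P ⊆ PG.Dset x ∧ PG.conjSet x P ⊆ Q}

/-- The normalizer `N_A(R) = {a ∈ A : R ⊆ D(a), R^a = R}`. -/
def NIn (A R : Set L) : Set L :=
  {a ∈ A | R ⊆ PG.Dset a ∧ PG.conjSet a R = R}

end PartialGroup

/-- A locality `(L, Δ, S)` in the sense of Chermak. -/
structure Locality (L : Type u) extends PartialGroup L where
  finite : Finite L
  p : ℕ
  p_prime : p.Prime
  S : Set L
  Δ : Set (Set L)
  Δ_nonempty : Δ.Nonempty
  Δ_subgroups : ∀ P ∈ Δ, P ⊆ S ∧ toPartialGroup.IsSubgroup P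
  L1 : toPartialGroup.IsPSubgroup p S ∧
    ∀ T : Set L, toPartialGroup.IsPSubgroup p T → S ⊆ T → S = T
  L2 : ∀ wrd : List L, wrd ∈ toPartialGroup.D ↔ toPartialGroup.InDVia Δ wrd
  L3 : ∀ Q : Set L, Q ⊆ S → toPartialGroup.IsSubgroup Q →
    (∃ P ∈ Δ, ∃ g : L, P ⊆ toPartialGroup.Dset g ∧ toPartialGroup.conjSet g P ⊆ Q) → Q ∈ Δ

namespace Locality

variable {L : Type u} (Loc : Locality L)

/-- `S_g` for the locality. -/
def Sg (g : L) : Set L := Loc.toPartialGroup.Sg Loc.S g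

/-- `S_w` for the locality. -/
def Sw (wrd : List L) : Set L := Loc.toPartialGroup.Sw Loc.S wrd

/-- The domain `L∘Δ` of the relation `↑_K`: pairs `(f,P)` with `P ∈ Δ` and `P ≤ S_f`. -/
def LDelta : Set (L × Set L) := {fP | fP.2 ∈ Loc.Δ ∧ fP.2 ⊆ Loc.Sg fP.1}

/-- Chermak's relation `↑_K` on `L∘Δ`: `(f,P) ↑_K (g,Q)` iff there are
`x ∈ N_K(P,Q)` and `y ∈ N_K(P^f,Q^g)` with `xg = fy`. -/
def UpRel (K : Set L) (fP gQ : L × Set L) : Prop :=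
  ∃ x ∈ Loc.toPartialGroup.NBetween K fP.2 gQ.2,
    ∃ y ∈ Loc.toPartialGroup.NBetween K
        (Loc.toPartialGroup.conjSet fP.1 fP.2) (Loc.toPartialGroup.conjSet gQ.1 gQ.2),
      [x, gQ.1] ∈ Loc.toPartialGroup.D ∧ [fP.1, y] ∈ Loc.toPartialGroup.D ∧
        Loc.toPartialGroup.prod [x, gQ.1] = Loc.toPartialGroup.prod [fP.1, y]

/-- `f` is `↑_K`-maximal. -/
def UpMaximal (K : Set L) (f : L) : Prop :=
  ∀ gQ ∈ Loc.LDelta, Loc.UpRel K (f, Loc.Sg f) gQ → Loc.UpRel K gQ (f, Loc.Sg f)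

end Locality

/-- `ρ : L → L'` realizes `Loc'` as the quotient locality `L/K`:
it is a surjective homomorphism of partial groups with kernel `K`, whose fibers
are the maximal cosets of `K`, and with `D̄ = Dρ*`, `S̄ = Sρ`, `Δ̄ = {P̄ : P ∈ Δ}`. -/
structure IsQuotientMap {L : Type u} {L' : Type v} (Loc : Locality L) (K : Set L)
    (Loc' : Locality L') (ρ : L → L') : Prop where
  surj : Function.Surjective ρ
  D_eq : Loc'.D = (fun wrd : List L => wrd.map ρ) '' Loc.D
  hom : ∀ wrd ∈ Loc.D, Loc'.toPartialGroup.prod (wrd.map ρ) = ρ (Loc.toPartialGroup.prod wrd)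
  ker : ∀ f : L, ρ f = ρ Loc.toPartialGroup.one ↔ f ∈ K
  fiber : ∀ f g : L, ρ f = ρ g ↔ Loc.toPartialGroup.SameMaxCoset K f g
  S_eq : Loc'.S = ρ '' Loc.S
  Δ_eq : Loc'.Δ = (fun P : Set L => ρ '' P) '' Loc.Δ
  p_eq : Loc'.p = Loc.p

/-!
Let `f̄ = r̄` with `r ∈ R`, so `f = kg` and `r = k₂g` for some `k, k₂ ∈ K` and some `g` whose
coset `Kg` is maximal. Since every word in `S` lies in `D`, `S` is a group, so conjugation by
`s ∈ S` preserves `Δ`, and a word in `D` stays in `D` when letters from `S` are appended. Hence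
`(k, g, r⁻¹, r) ∈ D`, and `gr⁻¹ = k₂⁻¹` gives `f = (kgr⁻¹)r = (kk₂⁻¹)r ∈ KR`. Conversely, a
product `kr` lies in `Kr`, which (`L` being finite) lies in a maximal coset, which then also
contains `r`.
-/

namespace PartialGroup

variable {L : Type u} (PG : PartialGroup L)

theorem prod_insert_one {u w : List L} (h : u ++ w ∈ PG.D) :
    u ++ PG.one :: w ∈ PG.D ∧ PG.prod (u ++ w) = PG.prod (u ++ PG.one :: w) := by
  simpa [one] using PG.prod_assoc u [] w (by simpa using h)

theorem prod_one_cons (a : L) : [PG.one, a] ∈ PG.D ∧ PG.prod [PG.one, a] = a := by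
  have h := PG.prod_insert_one (u := []) (PG.single_mem a)
  exact ⟨h.1, by simpa [PG.prod_single] using h.2.symm⟩

theorem prod_cons_one (a : L) : [a, PG.one] ∈ PG.D ∧ PG.prod [a, PG.one] = a := by
  have h := PG.prod_insert_one (u := [a]) (w := []) (PG.single_mem a)
  exact ⟨h.1, by simpa [PG.prod_single] using h.2.symm⟩

theorem prod_inv_cons_self (a : L) : [PG.inv a, a] ∈ PG.D ∧ PG.prod [PG.inv a, a] = PG.one :=
  ⟨by simpa using PG.inv_word_mem [a] (PG.single_mem a),
    by simpa [one] using PG.prod_inv_word [a] (PG.single_mem a)⟩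

theorem prod_cons_inv_self (a : L) : [a, PG.inv a] ∈ PG.D ∧ PG.prod [a, PG.inv a] = PG.one := by
  simpa [PG.inv_inv] using PG.prod_inv_cons_self (PG.inv a)

theorem prod_cons_pair {a b c : L} (h : [a, b, c] ∈ PG.D) :
    [a, PG.prod [b, c]] ∈ PG.D ∧ PG.prod [a, b, c] = PG.prod [a, PG.prod [b, c]] := by
  simpa using PG.prod_assoc [a] [b, c] [] (by simpa using h)

theorem prod_pair_cons {a b c : L} (h : [a, b, c] ∈ PG.D) :
    [PG.prod [a, b], c] ∈ PG.D ∧ PG.prod [a, b, c] = PG.prod [PG.prod [a, b], c] := by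
  simpa using PG.prod_assoc [] [a, b] [c] (by simpa using h)

theorem prod_pair_assoc {a b c : L} (h : [a, b, c] ∈ PG.D) :
    PG.prod [PG.prod [a, b], c] = PG.prod [a, PG.prod [b, c]] :=
  (PG.prod_pair_cons h).2.symm.trans (PG.prod_cons_pair h).2

theorem eq_inv_of_prod_eq_one {a b : L} (hab : [a, b] ∈ PG.D) (h : PG.prod [a, b] = PG.one) :
    b = PG.inv a := by
  have hw : [PG.inv a, a, b] ∈ PG.D := by
    simpa using (PG.append_closed [PG.inv b] _ (by simpa using PG.inv_word_mem _ hab)).2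
  calc b = PG.prod [PG.prod [PG.inv a, a], b] := by
        rw [(PG.prod_inv_cons_self a).2, (PG.prod_one_cons b).2]
    _ = PG.prod [PG.inv a, PG.prod [a, b]] := PG.prod_pair_assoc hw
    _ = PG.inv a := by rw [h, (PG.prod_cons_one _).2]

theorem mem_coset_self {K : Set L} (hK : PG.one ∈ K) (f : L) : f ∈ PG.coset K f :=
  ⟨PG.one, hK, (PG.prod_one_cons f).1, (PG.prod_one_cons f).2.symm⟩

theorem exists_isMaxCoset_superset [Finite L] (K : Set L) (f : L) :
    ∃ C, PG.IsMaxCoset K C ∧ PG.coset K f ⊆ C := by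
  obtain ⟨C, hfC, hC⟩ :=
    (Set.toFinite {C | ∃ g, C = PG.coset K g}).exists_le_maximal ⟨f, rfl⟩
  exact ⟨C, ⟨hC.1, fun g hg => le_antisymm hg (hC.2 ⟨g, rfl⟩ hg)⟩, hfC⟩

end PartialGroup

namespace Locality

variable {L : Type u} (Loc : Locality L)

theorem word_mem_D_of_mem_S {w : List L} (hw : ∀ x ∈ w, x ∈ Loc.S) : w ∈ Loc.D :=
  Loc.L1.1.1.2 w hw

theorem prod_mem_S {w : List L} (hw : ∀ x ∈ w, x ∈ Loc.S) : Loc.prod w ∈ Loc.S :=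
  Loc.L1.1.1.1.2.2 w (Loc.word_mem_D_of_mem_S hw) hw

theorem map_coe_mem_D (xs : List Loc.S) : xs.map (↑) ∈ Loc.D :=
  Loc.word_mem_D_of_mem_S fun y hy => by
    obtain ⟨z, -, rfl⟩ := List.mem_map.1 hy
    exact z.2

instance : Mul Loc.S :=
  ⟨fun a b => ⟨Loc.prod [a, b], Loc.prod_mem_S (by simp [a.2, b.2])⟩⟩

instance : One Loc.S :=
  ⟨⟨Loc.one, Loc.prod_mem_S (by simp)⟩⟩

instance : Inv Loc.S :=
  ⟨fun a => ⟨Loc.inv a, Loc.L1.1.1.1.2.1 a a.2⟩⟩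

@[simp] theorem coe_mul (a b : Loc.S) : ((a * b : Loc.S) : L) = Loc.prod [a, b] := rfl

@[simp] theorem coe_inv (a : Loc.S) : ((a⁻¹ : Loc.S) : L) = Loc.inv a := rfl

instance : Group Loc.S :=
  Group.ofLeftAxioms
    (fun a b c => Subtype.ext <| Loc.prod_pair_assoc <| Loc.map_coe_mem_D [a, b, c])
    (fun a => Subtype.ext (Loc.prod_one_cons a).2)
    (fun a => Subtype.ext (Loc.prod_inv_cons_self a).2)

theorem coe_list_prod (xs : List Loc.S) : ((xs.prod : Loc.S) : L) = Loc.prod (xs.map (↑)) := by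
  induction xs with
  | nil => rfl
  | cons x xs ih =>
    rw [List.prod_cons, coe_mul, ih, List.map_cons]
    simpa [Loc.prod_single] using
      (Loc.prod_assoc [x] (xs.map (↑)) [] (by simpa using Loc.map_coe_mem_D (x :: xs))).2.symm

theorem conj_eq_coe (s x : Loc.S) : Loc.conj s x = ((s⁻¹ * x * s : Loc.S) : L) := by
  simpa [PartialGroup.conj, mul_assoc] using (Loc.coe_list_prod [s⁻¹, x, s]).symm

theorem isSubgroup_iff {P : Set L} (hPS : P ⊆ Loc.S) :
    Loc.IsSubgroup P ↔ ∃ H : Subgroup Loc.S, P = (↑) '' (H : Set Loc.S) := by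
  constructor
  · intro hP
    refine ⟨{ carrier := {x | (x : L) ∈ P}
              mul_mem' := fun {a b} ha hb =>
                hP.1.2.2 _ (Loc.map_coe_mem_D [a, b]) (by simpa using ⟨ha, hb⟩)
              one_mem' := hP.1.2.2 [] Loc.nil_mem (by simp)
              inv_mem' := fun {a} ha => hP.1.2.1 a ha }, ?_⟩
    ext x
    exact ⟨fun hx => ⟨⟨x, hPS hx⟩, hx, rfl⟩, by rintro ⟨y, hy, rfl⟩; exact hy⟩
  · rintro ⟨H, rfl⟩
    refine ⟨⟨⟨_, _, H.one_mem, rfl⟩, ?_, ?_⟩,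
      fun w hw => Loc.word_mem_D_of_mem_S fun x hx => hPS (hw x hx)⟩
    · rintro _ ⟨y, hy, rfl⟩
      exact ⟨y⁻¹, H.inv_mem hy, rfl⟩
    · intro v _ hv
      lift v to List Loc.S using fun x hx => hPS (hv x hx)
      refine ⟨v.prod, H.list_prod_mem fun x hx => ?_, Loc.coe_list_prod v⟩
      simpa using hv x (List.mem_map_of_mem hx)

theorem S_subset_Dset {s : L} (hs : s ∈ Loc.S) : Loc.S ⊆ Loc.Dset s := fun x hx =>
  Loc.map_coe_mem_D [(⟨s, hs⟩ : Loc.S)⁻¹, ⟨x, hx⟩, ⟨s, hs⟩]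

theorem conjSet_mem_Δ {P : Set L} (hP : P ∈ Loc.Δ) {s : L} (hs : s ∈ Loc.S) :
    Loc.conjSet s P ∈ Loc.Δ := by
  obtain ⟨hPS, hPsub⟩ := Loc.Δ_subgroups P hP
  obtain ⟨H, rfl⟩ := (Loc.isSubgroup_iff hPS).1 hPsub
  lift s to Loc.S using hs
  have hconj : Loc.conjSet s ((↑) '' (H : Set Loc.S)) =
      (↑) '' ((H.map (MulAut.conj s⁻¹).toMonoidHom : Subgroup Loc.S) : Set Loc.S) := by
    simp [PartialGroup.conjSet, Set.image_image, Loc.conj_eq_coe]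
  have hsub : Loc.conjSet s ((↑) '' (H : Set Loc.S)) ⊆ Loc.S := by
    rw [hconj]
    exact Subtype.coe_image_subset _ _
  exact Loc.L3 _ hsub ((Loc.isSubgroup_iff hsub).2 ⟨_, hconj⟩)
    ⟨_, hP, s, hPS.trans (Loc.S_subset_Dset s.2), subset_rfl⟩

theorem append_singleton_mem_D {w : List L} (hw : w ∈ Loc.D) {s : L} (hs : s ∈ Loc.S) :
    w ++ [s] ∈ Loc.D := by
  obtain ⟨P, hPΔ, hP⟩ := (Loc.L2 w).1 hw
  have hlast : P (Fin.last _) ⊆ Loc.S := (Loc.Δ_subgroups _ (hPΔ _)).1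
  refine (Loc.L2 _).2 ⟨fun i => if h : i.val < w.length + 1 then P ⟨i, h⟩
    else Loc.conjSet s (P (Fin.last _)), fun i => ?_, fun ⟨i, hi⟩ => ?_⟩
  · dsimp only
    split_ifs
    exacts [hPΔ _, Loc.conjSet_mem_Δ (hPΔ _) hs]
  · simp only [List.length_append, List.length_singleton] at hi
    rcases Nat.lt_succ_iff_lt_or_eq.1 hi with hi | rfl
    · simpa [hi, hi.le, List.getElem_append_left hi] using hP ⟨i, hi⟩
    · simpa using ⟨hlast.trans (Loc.S_subset_Dset hs), rfl⟩

theorem mem_coset_of_mem_coset_of_mem_S {K : Set L} (hK : Loc.IsPartialSubgroup K) {f r g : L}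
    (hr : r ∈ Loc.S) (hf : f ∈ Loc.coset K g) (hrg : r ∈ Loc.coset K g) :
    f ∈ Loc.coset K r := by
  obtain ⟨k, hk, hkg, rfl⟩ := hf
  obtain ⟨k₂, hk₂, hk₂g, rfl⟩ := hrg
  set r := Loc.prod [k₂, g]
  set f := Loc.prod [k, g]
  have hir : Loc.inv r ∈ Loc.S := ((⟨r, hr⟩ : Loc.S)⁻¹).2
  have hk₂gi : [k₂, g, Loc.inv r] ∈ Loc.D := by
    simpa using Loc.append_singleton_mem_D hk₂g hir
  have hkgi : [k, g, Loc.inv r] ∈ Loc.D := by simpa using Loc.append_singleton_mem_D hkg hir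
  have hfir : [f, Loc.inv r, r] ∈ Loc.D := by
    simpa using Loc.append_singleton_mem_D
      (Loc.append_singleton_mem_D (Loc.single_mem f) hir) hr
  have hy : Loc.prod [g, Loc.inv r] = Loc.inv k₂ := by
    refine Loc.eq_inv_of_prod_eq_one (Loc.prod_cons_pair hk₂gi).1 ?_
    rw [← Loc.prod_pair_assoc hk₂gi, (Loc.prod_cons_inv_self r).2]
  have hk' : Loc.prod [f, Loc.inv r] ∈ K := by
    rw [Loc.prod_pair_assoc hkgi, hy]
    refine hK.2.2 _ ?_ (by simpa using ⟨hk, hK.2.1 k₂ hk₂⟩)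
    simpa [hy] using (Loc.prod_cons_pair hkgi).1
  refine ⟨_, hk', (Loc.prod_pair_cons hfir).1, ?_⟩
  calc f = Loc.prod [f, Loc.one] := (Loc.prod_cons_one f).2.symm
    _ = Loc.prod [f, Loc.prod [Loc.inv r, r]] := by rw [(Loc.prod_inv_cons_self r).2]
    _ = Loc.prod [Loc.prod [f, Loc.inv r], r] := (Loc.prod_pair_assoc hfir).symm

end Locality

theorem preimage_of_subgroup_eq_KR_general {L : Type u} (Loc : Locality L) (K : Set L)
    (hK : Loc.toPartialGroup.IsPartialNormal K) (R : Set L)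
    (hRS : R ⊆ Loc.S) :
    {f : L | ∃ r ∈ R, Loc.toPartialGroup.SameMaxCoset K f r} =
      Loc.toPartialGroup.setProd K R := by
  have : Finite L := Loc.finite
  ext f
  constructor
  · rintro ⟨r, hrR, C, ⟨⟨g, rfl⟩, -⟩, hf, hr⟩
    obtain ⟨k, hk, hkr, rfl⟩ := Loc.mem_coset_of_mem_coset_of_mem_S hK.1 (hRS hrR) hf hr
    exact ⟨k, hk, r, hrR, hkr, rfl⟩
  · rintro ⟨k, hk, r, hrR, hkr, rfl⟩
    obtain ⟨C, hC, hrC⟩ := Loc.exists_isMaxCoset_superset K r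
    have hone : Loc.one ∈ K := hK.1.2.2 [] Loc.nil_mem (by simp)
    exact ⟨r, hrR, C, hC, hrC ⟨k, hk, hkr, rfl⟩, hrC (Loc.mem_coset_self hone r)⟩

/-- for a partial normal subgroup `K` of a locality and a subgroup
`R ≤ S`, the full preimage of `R̄` under the quotient map `L → L/K` (i.e. the set of
`f ∈ L` lying in the same maximal coset of `K` as some element of `R`) equals `KR`. -/
theorem preimage_of_subgroup_eq_KR {L : Type u} (Loc : Locality L) (K : Set L)
    (hK : Loc.toPartialGroup.IsPartialNormal K) (R : Set L)
    (hRS : R ⊆ Loc.S) (hR : Loc.toPartialGroup.IsSubgroup R) :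
    {f : L | ∃ r ∈ R, Loc.toPartialGroup.SameMaxCoset K f r} =
      Loc.toPartialGroup.setProd K R :=
  preimage_of_subgroup_eq_KR_general Loc K hK R hRS
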